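/- For θ ∈ [−θ̄, θ̄] with 0 < θ̄ ≤ π/2, the sine function satisfies cos(θ̄/2)·(θ − θ̄/2) + sin(θ̄/2) ≥ sin θ and cos(θ̄/2)·(θ + θ̄/2) − sin(θ̄/2) ≤ sin θ. -/
import Mathlib

open Real Set

lemma huygens (c : ℝ) (h0 : 0 ≤ c) (h1 : c ≤ π/4) : 3*c ≤ 2*Real.sin c + Real.tan c := by
  have hmono : MonotoneOn (fun x => 2*Real.sin x + Real.tan x - 3*x) (Icc 0 (π/4)) := by
    apply monotoneOn_of_deriv_nonneg (convex_Icc _ _)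
    · apply ContinuousOn.sub
      · apply ContinuousOn.add
        · exact (Real.continuous_sin.continuousOn).const_smul 2 |>.congr (by intro x _; simp [smul_eq_mul])
        · apply Real.continuousOn_tan.mono
          intro x hx
          have : Real.cos x > 0 := Real.cos_pos_of_mem_Ioo
            ⟨by linarith [hx.1, Real.pi_pos], by linarith [hx.2, Real.pi_pos]⟩
          exact this.ne'
      · exact (continuous_const.mul continuous_id).continuousOn
    · intro x hx
      rw [interior_Icc] at hx
      have hcos : Real.cos x ≠ 0 := by
        have : Real.cos x > 0 := Real.cos_pos_of_mem_Ioo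
          ⟨by linarith [hx.1, Real.pi_pos], by linarith [hx.2, Real.pi_pos]⟩
        exact this.ne'
      exact (((Real.hasDerivAt_sin x).const_mul 2).add (Real.hasDerivAt_tan hcos)
        |>.sub ((hasDerivAt_id x).const_mul 3)).differentiableAt.differentiableWithinAt
    · intro x hx
      rw [interior_Icc] at hx
      have hcpos : 0 < Real.cos x := Real.cos_pos_of_mem_Ioo
        ⟨by linarith [hx.1, Real.pi_pos], by linarith [hx.2, Real.pi_pos]⟩
      have hder : HasDerivAt (fun x => 2*Real.sin x + Real.tan x - 3*x)
          (2 * Real.cos x + 1 / Real.cos x ^ 2 - 3 * 1) x :=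
        (((Real.hasDerivAt_sin x).const_mul 2).add (Real.hasDerivAt_tan hcpos.ne')
          |>.sub ((hasDerivAt_id x).const_mul 3))
      rw [hder.deriv]
      have hc1 : Real.cos x ≤ 1 := Real.cos_le_one x
      have h2 : (1 - Real.cos x)^2 * (2*Real.cos x + 1) ≥ 0 := by positivity
      have heq : 2 * Real.cos x + 1 / Real.cos x ^ 2 - 3 * 1
          = (1 - Real.cos x)^2 * (2*Real.cos x + 1) / Real.cos x ^ 2 := by
        field_simp; ring
      rw [heq]
      positivity
  have h4 : (0:ℝ) ∈ Icc 0 (π/4) := ⟨le_refl _, by positivity⟩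
  have h5 : c ∈ Icc 0 (π/4) := ⟨h0, h1⟩
  have := hmono h4 h5 h0
  simp [Real.tan_zero] at this
  linarith

lemma envelope (c θ : ℝ) (hc0 : 0 < c) (hc1 : c ≤ π/4) (hθ : |θ| ≤ 2*c) :
    Real.sin θ ≤ Real.cos c * (θ - c) + Real.sin c := by
  have hpi : c ≤ π := by linarith [Real.pi_pos]
  have h2pi : 2*c ≤ π := by linarith [Real.pi_pos, Real.pi_gt_three]
  set f : ℝ → ℝ := fun x => Real.cos c * (x - c) + Real.sin c - Real.sin x with hf
  have hder : ∀ x, HasDerivAt f (Real.cos c - Real.cos x) x := by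
    intro x
    have : HasDerivAt f (Real.cos c * 1 - Real.cos x) x :=
      ((((hasDerivAt_id x).sub_const c).const_mul (Real.cos c)).add_const (Real.sin c)).sub
        (Real.hasDerivAt_sin x)
    simpa using this
  have hcont : Continuous f := by
    fun_prop
  have mono1 : MonotoneOn f (Icc c (2*c)) := by
    apply monotoneOn_of_deriv_nonneg (convex_Icc _ _) hcont.continuousOn
      (fun x _ => (hder x).differentiableAt.differentiableWithinAt)
    intro x hx
    rw [interior_Icc] at hx
    rw [(hder x).deriv, sub_nonneg]
    exact Real.cos_le_cos_of_nonneg_of_le_pi hc0.le (by linarith [hx.2]) hx.1.le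
  have anti : AntitoneOn f (Icc (-c) c) := by
    apply antitoneOn_of_deriv_nonpos (convex_Icc _ _) hcont.continuousOn
      (fun x _ => (hder x).differentiableAt.differentiableWithinAt)
    intro x hx
    rw [interior_Icc] at hx
    rw [(hder x).deriv, sub_nonpos]
    calc Real.cos c ≤ Real.cos |x| :=
          Real.cos_le_cos_of_nonneg_of_le_pi (abs_nonneg x) hpi (abs_le.mpr ⟨hx.1.le, hx.2.le⟩)
      _ = Real.cos x := Real.cos_abs x
  have mono2 : MonotoneOn f (Icc (-(2*c)) (-c)) := by
    apply monotoneOn_of_deriv_nonneg (convex_Icc _ _) hcont.continuousOn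
      (fun x _ => (hder x).differentiableAt.differentiableWithinAt)
    intro x hx
    rw [interior_Icc] at hx
    rw [(hder x).deriv, sub_nonneg]
    calc Real.cos x = Real.cos (-x) := (Real.cos_neg x).symm
      _ ≤ Real.cos c := Real.cos_le_cos_of_nonneg_of_le_pi hc0.le (by linarith [hx.1]) (by linarith [hx.2])
  have hfc : f c = 0 := by simp [hf]
  have habs := abs_le.mp hθ
  have key : 0 ≤ f θ := by
    rcases le_total c θ with h | h
    · have := mono1 ⟨le_refl c, by linarith⟩ ⟨h, habs.2⟩ h
      linarith [hfc ▸ this]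
    · rcases le_total (-c) θ with h' | h'
      · have := anti ⟨h', h⟩ ⟨by linarith, le_refl c⟩ h
        linarith [hfc ▸ this]
      · have hend : 0 ≤ f (-(2*c)) := by
          have hcc : 0 < Real.cos c := Real.cos_pos_of_mem_Ioo
            ⟨by linarith [Real.pi_pos], by linarith [Real.pi_pos]⟩
          have htan : Real.tan c * Real.cos c = Real.sin c := Real.tan_mul_cos hcc.ne'
          have hhuy := huygens c hc0.le hc1
          have hmul : 3*c*Real.cos c ≤ (2*Real.sin c + Real.tan c) * Real.cos c :=
            mul_le_mul_of_nonneg_right hhuy hcc.le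
          have hs2 : Real.sin (2*c) = 2 * Real.sin c * Real.cos c := Real.sin_two_mul c
          simp only [hf, Real.sin_neg]
          nlinarith [hmul, htan, hs2]
        have := mono2 ⟨le_refl _, by linarith⟩ ⟨habs.1, h'⟩ habs.1
        linarith
  simp only [hf] at key
  linarith

/-- Linear convex envelope bounds for sine on [−θ̄, θ̄] with 0 < θ̄ ≤ π/2. -/
theorem sin_linear_envelopes (θ θbar : ℝ)
    (h0 : 0 < θbar) (h1 : θbar ≤ Real.pi / 2) (hθ : |θ| ≤ θbar) :
    Real.sin θ ≤ Real.cos (θbar / 2) * (θ - θbar / 2) + Real.sin (θbar / 2) ∧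
    Real.cos (θbar / 2) * (θ + θbar / 2) - Real.sin (θbar / 2) ≤ Real.sin θ := by
  have hc0 : 0 < θbar / 2 := by linarith
  have hc1 : θbar / 2 ≤ π / 4 := by linarith
  have hθ2 : |θ| ≤ 2 * (θbar / 2) := by linarith
  have hθ2' : |(-θ)| ≤ 2 * (θbar / 2) := by rwa [abs_neg]
  constructor
  · exact envelope (θbar/2) θ hc0 hc1 hθ2
  · have := envelope (θbar/2) (-θ) hc0 hc1 hθ2'
    rw [Real.sin_neg] at this
    linarith
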